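/- arXiv:1107.5881 — 2 statements merged into one kernel-verified Lean document; each statement's English description precedes it below -/
import Mathlib

section
/- Correctness of the protocol (composite statement): for every database A = (a^1,…,a^ℓ) ∈ Σ^ℓ and every index i ∈ Fin ℓ, the composition F · C · U · Z_i applied (by matrix-vector multiplication) to the initial state Φ_A equals the standard basis vector at (a^i, 0, 0), where Z_i is the diagonal matrix with entries (-1)^{(q(i)).val} on the diagonal, U has entries U((x,z,q),(x',z',q')) = 1 iff x = x', z = z' and q(k) = q'(k) + x·a^k for all k, C has entries C((x,z,q),(x',z',q')) = 1 iff x = x', z = z' + x and q = q', and F has entries F((x,z,q),(x',z',q')) = 2^{-r/2} · (-1)^{(x·x').val} if z = z' and q = q' and 0 otherwise. In particular, the user who measures register R in the computational basis obtains the item a^i with probability 1. -/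
/-!
The phase gate `Z_i` multiplies the branch `x` of `Φ_A` by `(-1)^{x·a^i}`. The gates `U` and `C`
permute basis states, and since adding `x·a^k` (resp. `x`) twice cancels in characteristic 2 they
uncompute the registers `Q` and `R'`, leaving `2^{-r/2} ∑_x (-1)^{x·a^i} |x, 0, 0⟩`. The gate `F`
is the Hadamard transform on `R`, and orthogonality of the characters `x ↦ (-1)^{u·x}` of
`(ZMod 2)^r` sends this state to `|a^i, 0, 0⟩`.
-/

open scoped BigOperators
open Matrix

/-- The item set `Σ = {0,1}^r`, identified with functions `Fin r → ZMod 2`. -/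
abbrev Sig (r : ℕ) := Fin r → ZMod 2

/-- The full register space `(R, R', Q_1, …, Q_ℓ)`. -/
abbrev Reg (r ℓ : ℕ) := Sig r × Sig r × (Fin ℓ → ZMod 2)

/-- Dot product `u · v = ∑ k, u k * v k` in `ZMod 2`. -/
def dot {r : ℕ} (u v : Sig r) : ZMod 2 := ∑ k, u k * v k

/-- The amplitude `2^{-r/2}` as a complex number. -/
noncomputable def amp (r : ℕ) : ℂ := ((Real.sqrt (2 ^ r) : ℝ) : ℂ)⁻¹

/-- The state `Φ_A` prepared by the server at Step 1. -/
noncomputable def PhiA (r ℓ : ℕ) (A : Fin ℓ → Sig r) : Reg r ℓ → ℂ := fun p =>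
  if p.2.1 = p.1 ∧ ∀ k : Fin ℓ, p.2.2 k = dot p.1 (A k) then amp r else 0

/-- The Pauli `Z` gate applied to register `Q_i` (Step 2). -/
noncomputable def Zgate (r ℓ : ℕ) (i : Fin ℓ) : Matrix (Reg r ℓ) (Reg r ℓ) ℂ :=
  fun p p' => if p = p' then (-1 : ℂ) ^ (p.2.2 i).val else 0

/-- The server's Step-3 operation: `U_{a^k}` applied to `(R, Q_k)` for each `k`. -/
noncomputable def Ugate (r ℓ : ℕ) (A : Fin ℓ → Sig r) :
    Matrix (Reg r ℓ) (Reg r ℓ) ℂ := fun p p' =>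
  if p.1 = p'.1 ∧ p.2.1 = p'.2.1 ∧
      ∀ k : Fin ℓ, p.2.2 k = p'.2.2 k + dot p.1 (A k)
  then 1 else 0

/-- The CNOT gate from register `R` to register `R'` (Step 4, first part). -/
noncomputable def Cgate (r ℓ : ℕ) : Matrix (Reg r ℓ) (Reg r ℓ) ℂ := fun p p' =>
  if p.1 = p'.1 ∧ p.2.1 = p'.2.1 + p.1 ∧ p.2.2 = p'.2.2 then 1 else 0

/-- The QFT applied to register `R` (Step 4, second part). -/
noncomputable def Fgate (r ℓ : ℕ) : Matrix (Reg r ℓ) (Reg r ℓ) ℂ := fun p p' =>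
  if p.2.1 = p'.2.1 ∧ p.2.2 = p'.2.2
  then amp r * (-1 : ℂ) ^ (dot p.1 p'.1).val else 0

def signChar : AddChar (ZMod 2) ℂ where
  toFun a := (-1) ^ a.val
  map_zero_eq_one' := by simp
  map_add_eq_mul' a b := by rw [ZMod.val_add, ← neg_one_pow_eq_pow_mod_two, pow_add]

lemma signChar_apply (a : ZMod 2) : signChar a = (-1) ^ a.val := rfl

lemma dot_eq_dotProduct {r : ℕ} (u v : Sig r) : dot u v = u ⬝ᵥ v := rfl

def walshChar {r : ℕ} (u : Sig r) : AddChar (Sig r) ℂ :=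
  signChar.compAddMonoidHom (AddMonoidHom.mk' (dot u) (dotProduct_add u))

lemma walshChar_apply {r : ℕ} (u x : Sig r) : walshChar u x = (-1) ^ (dot u x).val := rfl

/-- In the additive notation of `AddChar`, `0` is the trivial character. -/
lemma walshChar_eq_zero_iff {r : ℕ} (u : Sig r) : walshChar u = 0 ↔ u = 0 := by
  refine ⟨fun h => ?_, fun h => by ext x; simp [walshChar_apply, h, dot_eq_dotProduct]⟩
  by_contra hu
  obtain ⟨k, hk⟩ := Function.ne_iff.1 hu
  have huk : u k = 1 := (by decide : ∀ a : ZMod 2, a ≠ 0 → a = 1) _ hk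
  have := DFunLike.congr_fun h (Pi.single k 1)
  norm_num [walshChar_apply, dot_eq_dotProduct, dotProduct_single, huk, ZMod.val_one] at this

lemma sum_neg_one_pow_dot {r : ℕ} (u : Sig r) :
    ∑ x : Sig r, (-1 : ℂ) ^ (dot u x).val = if u = 0 then 2 ^ r else 0 := by
  classical
  simpa [walshChar_apply, walshChar_eq_zero_iff, ZMod.card] using (walshChar u).sum_eq_ite

lemma amp_mul_self (r : ℕ) : amp r * amp r = ((2 : ℂ) ^ r)⁻¹ := by
  rw [amp, ← mul_inv, ← Complex.ofReal_mul, Real.mul_self_sqrt (by positivity)]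
  push_cast; rfl

lemma mulVec_eq_comp_of_apply_eq_ite {m n R : Type*} [Fintype n] [DecidableEq n]
    [NonAssocSemiring R] {M : Matrix m n R} {f : m → n}
    (hM : ∀ p p', M p p' = if p' = f p then 1 else 0) (v : n → R) : M *ᵥ v = v ∘ f := by
  ext p
  simp [mulVec, dotProduct, hM]

lemma eq_add_iff_eq_add_of_charP_two {R : Type*} [Ring R] [CharP R 2] (a b c : R) :
    a = b + c ↔ b = a + c :=
  CharTwo.eq_add_iff_add_eq.trans eq_comm

section Gates

variable {r ℓ : ℕ}

lemma Zgate_eq_diagonal (i : Fin ℓ) :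
    Zgate r ℓ i = diagonal fun p => (-1 : ℂ) ^ (p.2.2 i).val :=
  rfl

lemma Ugate_apply (A : Fin ℓ → Sig r) (p p' : Reg r ℓ) :
    Ugate r ℓ A p p' = if p' = (p.1, p.2.1, fun k => p.2.2 k + dot p.1 (A k)) then 1 else 0 := by
  obtain ⟨x, z, q⟩ := p
  obtain ⟨x', z', q'⟩ := p'
  simp only [Ugate, Prod.mk.injEq, funext_iff, eq_add_iff_eq_add_of_charP_two (q _)]
  congr 1
  aesop

lemma Cgate_apply (p p' : Reg r ℓ) :
    Cgate r ℓ p p' = if p' = (p.1, p.2.1 + p.1, p.2.2) then 1 else 0 := by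
  obtain ⟨x, z, q⟩ := p
  obtain ⟨x', z', q'⟩ := p'
  simp only [Cgate, Prod.mk.injEq, funext_iff, Pi.add_apply, eq_add_iff_eq_add_of_charP_two (z _)]
  congr 1
  aesop

lemma Zgate_mulVec (i : Fin ℓ) (v : Reg r ℓ → ℂ) :
    Zgate r ℓ i *ᵥ v = fun p => (-1 : ℂ) ^ (p.2.2 i).val * v p := by
  ext p
  rw [Zgate_eq_diagonal, mulVec_diagonal]

lemma Ugate_mulVec (A : Fin ℓ → Sig r) (v : Reg r ℓ → ℂ) :
    Ugate r ℓ A *ᵥ v = fun p => v (p.1, p.2.1, fun k => p.2.2 k + dot p.1 (A k)) :=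
  mulVec_eq_comp_of_apply_eq_ite (Ugate_apply A) v

lemma Cgate_mulVec (v : Reg r ℓ → ℂ) :
    Cgate r ℓ *ᵥ v = fun p => v (p.1, p.2.1 + p.1, p.2.2) :=
  mulVec_eq_comp_of_apply_eq_ite Cgate_apply v

lemma Fgate_mulVec_apply (v : Reg r ℓ → ℂ) (x : Sig r) (y : Sig r × (Fin ℓ → ZMod 2)) :
    (Fgate r ℓ *ᵥ v) (x, y) = amp r * ∑ x', (-1 : ℂ) ^ (dot x x').val * v (x', y) := by
  have hF : ∀ p' : Reg r ℓ, Fgate r ℓ (x, y) p' =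
      if y = p'.2 then amp r * (-1 : ℂ) ^ (dot x p'.1).val else 0 := fun p' => by
    simp only [Fgate, Prod.ext_iff]
  simp only [mulVec, dotProduct, hF, Fintype.sum_prod_type, ite_mul, zero_mul,
    Finset.sum_ite_eq, Finset.mem_univ, if_true, Finset.mul_sum, mul_assoc]

noncomputable def walshState (a : Sig r) : Reg r ℓ → ℂ := fun p =>
  if p.2 = 0 then amp r * (-1) ^ (dot p.1 a).val else 0

lemma Fgate_mulVec_walshState (a : Sig r) :
    Fgate r ℓ *ᵥ walshState a = fun p => if p = (a, 0, 0) then 1 else 0 := by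
  ext ⟨x, y⟩
  rw [Fgate_mulVec_apply]
  by_cases hy : y = 0
  · have hsign : ∀ x', (-1 : ℂ) ^ (dot x x').val * (-1) ^ (dot x' a).val =
        (-1) ^ (dot (x + a) x').val := fun x' => by
      simp only [← signChar_apply, ← AddChar.map_add_eq_mul, dot_eq_dotProduct,
        add_dotProduct, dotProduct_comm x' a]
    have hxa : x + a = 0 ↔ x = a := by
      rw [add_eq_zero_iff_eq_neg,
        show -a = a from funext fun k => ZMod.neg_eq_self_mod_two (a k)]
    simp only [walshState, hy, if_true, mul_left_comm _ (amp r), ← Finset.mul_sum, hsign,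
      sum_neg_one_pow_dot, ← mul_assoc, amp_mul_self, hxa, Prod.mk.injEq, Prod.mk_zero_zero,
      and_true]
    split_ifs <;> simp
  · simp [walshState, hy, Prod.mk_zero_zero]

lemma Cgate_mulVec_Ugate_mulVec_Zgate_mulVec_PhiA (A : Fin ℓ → Sig r) (i : Fin ℓ) :
    Cgate r ℓ *ᵥ (Ugate r ℓ A *ᵥ (Zgate r ℓ i *ᵥ PhiA r ℓ A)) = walshState (A i) := by
  ext ⟨x, z, q⟩
  have huncompute : (z + x = x ∧ ∀ k, q k + dot x (A k) = dot x (A k)) ↔ (z, q) = 0 := by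
    simp only [add_eq_right, Prod.mk_eq_zero, funext_iff, Pi.zero_apply]
  simp only [Cgate_mulVec, Ugate_mulVec, Zgate_mulVec, PhiA, walshState, huncompute]
  split_ifs with h
  · rw [(Prod.mk_eq_zero.1 h).2, Pi.zero_apply, zero_add, mul_comm]
  · rw [mul_zero]

end Gates

theorem stmt_7_general (r ℓ : ℕ) (A : Fin ℓ → Sig r) (i : Fin ℓ) :
    (Fgate r ℓ * Cgate r ℓ * Ugate r ℓ A * Zgate r ℓ i).mulVec (PhiA r ℓ A) =
      fun p : Reg r ℓ => if p = (A i, 0, 0) then 1 else 0 := by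
  rw [← mulVec_mulVec, ← mulVec_mulVec, ← mulVec_mulVec,
    Cgate_mulVec_Ugate_mulVec_Zgate_mulVec_PhiA, Fgate_mulVec_walshState]

/-- correctness of the protocol. The composition `F · C · U · Z_i`
applied to `Φ_A` is exactly the standard basis vector at `(a^i, 0, 0)`, so the user
who measures register `R` in the computational basis obtains `a^i` with probability 1. -/
theorem stmt_7 (r ℓ : ℕ) (hr : 0 < r) (hℓ : 0 < ℓ) (A : Fin ℓ → Sig r) (i : Fin ℓ) :
    (Fgate r ℓ * Cgate r ℓ * Ugate r ℓ A * Zgate r ℓ i).mulVec (PhiA r ℓ A) =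
      fun p : Reg r ℓ => if p = (A i, 0, 0) then 1 else 0 :=
  stmt_7_general r ℓ A i
end

section
/- Privacy of the protocol (the server obtains no information about the user's index): for every database A = (a^1,…,a^ℓ) ∈ Σ^ℓ and any two indexes i, j ∈ Fin ℓ, the reduced density matrices obtained by tracing out register R' from the states after Step 2 coincide: for all x, y ∈ Σ and q, q' : Fin ℓ → ZMod 2, Σ_{z ∈ Σ} Φ^{(i)}(x,z,q) · conj(Φ^{(i)}(y,z,q')) = Σ_{z ∈ Σ} Φ^{(j)}(x,z,q) · conj(Φ^{(j)}(y,z,q')), where Φ^{(i)}(x,z,q) = 2^{-r/2} · (-1)^{(x·a^i).val} if z = x and q(k) = x·a^k for all k, and 0 otherwise (and similarly for Φ^{(j)}). -/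
open scoped BigOperators

/-- The state `Φ^{(i)}` after Step 2, as a function of `(x, z, q)`. -/
noncomputable def PhiStep2 (r ℓ : ℕ) (A : Fin ℓ → Sig r) (i : Fin ℓ)
    (x z : Sig r) (q : Fin ℓ → ZMod 2) : ℂ :=
  if z = x ∧ ∀ k : Fin ℓ, q k = dot x (A k)
  then amp r * (-1 : ℂ) ^ (dot x (A i)).val else 0

/-- privacy of the protocol. The reduced density matrices obtained by
tracing out register `R'` after Step 2 coincide for any two user indexes `i, j`. -/
theorem stmt_9 (r ℓ : ℕ) (hr : 0 < r) (hℓ : 0 < ℓ) (A : Fin ℓ → Sig r)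
    (i j : Fin ℓ) (x y : Sig r) (q q' : Fin ℓ → ZMod 2) :
    (∑ z : Sig r,
        PhiStep2 r ℓ A i x z q * (starRingEnd ℂ) (PhiStep2 r ℓ A i y z q')) =
      ∑ z : Sig r,
        PhiStep2 r ℓ A j x z q * (starRingEnd ℂ) (PhiStep2 r ℓ A j y z q') := by
  apply Finset.sum_congr rfl
  intro z _
  unfold PhiStep2
  by_cases h1 : z = x ∧ ∀ k : Fin ℓ, q k = dot x (A k)
  · by_cases h2 : z = y ∧ ∀ k : Fin ℓ, q' k = dot y (A k)
    · have hxy : x = y := h1.1 ▸ h2.1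
      subst hxy
      have key : ∀ m : Fin ℓ, amp r * (-1 : ℂ) ^ (dot x (A m)).val *
          (starRingEnd ℂ) (amp r * (-1 : ℂ) ^ (dot x (A m)).val) = amp r * amp r := by
        intro m
        simp [amp, map_mul, map_pow, ← mul_pow]
        ring_nf
        simp [← mul_pow]
      simp only [if_pos h1, if_pos h2, key]
    · simp [if_neg h2]
  · simp [if_neg h1]
end
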